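/- Let σ be an n-qubit state, let C be the Haar-random MPS circuit on n qubits with subcircuit width k and T = n − k + 1 layers, and let Z_i denote the Pauli Z = diag(1, −1) acting on the i-th qubit and identity elsewhere. Then for all qubits i ≠ j in {1, …, n}, E[ tr(Z_i · C σ C†) · tr(Z_j · C σ C†) ] = 0, where E is over the independent Haar-random subcircuits. -/

import Mathlib

/-!
Common definitions: Haar measure on the unitary group, the MPS ansatz circuit,
tensor-product embeddings of local operators, and the quantities `h₁`, `h₂`.
-/

noncomputable section

namespace MPS

open MeasureTheory Matrix
open scoped ComplexOrder

/-- The unitary group `U(d)` as matrices over `ℂ`. -/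
abbrev UG (d : ℕ) : Submonoid (Matrix (Fin d) (Fin d) ℂ) := Matrix.unitaryGroup (Fin d) ℂ

instance matrixMeasurableSpace (m n : ℕ) : MeasurableSpace (Matrix (Fin m) (Fin n) ℂ) :=
  borel _

instance matrixBorelSpace (m n : ℕ) : BorelSpace (Matrix (Fin m) (Fin n) ℂ) := ⟨rfl⟩

instance UGCompact (d : ℕ) : CompactSpace (UG d) := by
  have h1 : IsClosed {A : Matrix (Fin d) (Fin d) ℂ | star A * A = 1} :=
    isClosed_eq (continuous_star.matrix_mul continuous_id) continuous_const
  have h2 : IsClosed {A : Matrix (Fin d) (Fin d) ℂ | A * star A = 1} :=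
    isClosed_eq (continuous_id.matrix_mul continuous_star) continuous_const
  have heq : (UG d : Set (Matrix (Fin d) (Fin d) ℂ)) =
      {A | star A * A = 1} ∩ {A | A * star A = 1} := by
    ext A
    simpa using Unitary.mem_iff
  have hclosed : IsClosed ((UG d : Set (Matrix (Fin d) (Fin d) ℂ))) := by
    rw [heq]; exact h1.inter h2
  have hsub : (UG d : Set (Matrix (Fin d) (Fin d) ℂ)) ⊆
      (Set.univ.pi fun _ : Fin d => Set.univ.pi fun _ : Fin d => Metric.closedBall (0 : ℂ) 1) := by
    intro A hA i _ j _
    simpa using entry_norm_bound_of_unitary hA i j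
  have hcpt : IsCompact ((UG d : Set (Matrix (Fin d) (Fin d) ℂ))) :=
    IsCompact.of_isClosed_subset
      (isCompact_univ_pi fun _ => isCompact_univ_pi fun _ => isCompact_closedBall 0 1)
      hclosed hsub
  exact isCompact_iff_compactSpace.mp hcpt

instance UGBorel (d : ℕ) : BorelSpace (UG d) :=
  Subtype.borelSpace _

instance UGTopGroup (d : ℕ) : IsTopologicalGroup (UG d) where
  continuous_mul := continuous_mul
  continuous_inv := by
    exact Continuous.subtype_mk (continuous_star.comp continuous_subtype_val) _

/-- The Haar probability measure on the unitary group `U(d)`. -/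
def haarUG (d : ℕ) : Measure (UG d) := Measure.haarMeasure ⊤

instance haarUGProb (d : ℕ) : IsProbabilityMeasure (haarUG d) := by
  constructor
  have := Measure.haarMeasure_self (G := UG d) (K₀ := ⊤)
  rw [TopologicalSpace.PositiveCompacts.coe_top] at this
  exact this

/-- The distribution of `T` independent Haar-random elements of `U(d)`. -/
def haarTuple (T d : ℕ) : Measure (Fin T → UG d) := Measure.pi fun _ => haarUG d

instance haarTupleProb (T d : ℕ) : IsProbabilityMeasure (haarTuple T d) :=
  Measure.pi.instIsProbabilityMeasure (fun _ : Fin T => haarUG d)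

/-- The `t`-th binary digit of `x` (from the least significant). -/
def bitAt (t x : ℕ) : ℕ := x / 2 ^ t % 2

/-- `bitAt` as an element of `Fin 2`. -/
def bitFin (t : ℕ) (x : ℕ) : Fin 2 := ⟨bitAt t x, Nat.mod_lt _ (by norm_num)⟩

/-- `I_{2^(n-k-b)} ⊗ U ⊗ I_{2^b}` for a `2^k × 2^k` matrix `U`, as a `2^n × 2^n` matrix,
with big-endian ordering of the qubits (qubit 1 = most significant bit). -/
def embed (n k b : ℕ) (U : Matrix (Fin (2 ^ k)) (Fin (2 ^ k)) ℂ) :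
    Matrix (Fin (2 ^ n)) (Fin (2 ^ n)) ℂ :=
  Matrix.of fun x y =>
    if (x : ℕ) / 2 ^ (k + b) = (y : ℕ) / 2 ^ (k + b) ∧ (x : ℕ) % 2 ^ b = (y : ℕ) % 2 ^ b then
      U ⟨(x : ℕ) / 2 ^ b % 2 ^ k, Nat.mod_lt _ (Nat.two_pow_pos k)⟩
        ⟨(y : ℕ) / 2 ^ b % 2 ^ k, Nat.mod_lt _ (Nat.two_pow_pos k)⟩
    else 0

/-- The MPS ansatz circuit `C = ∏_{p=1}^{T} (I_{2^{n-k-p+1}} ⊗ U_p ⊗ I_{2^{p-1}})`, the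
product taken with the `p = 1` factor leftmost. -/
def mpsCircuit (n k : ℕ) {T : ℕ} (U : Fin T → Matrix (Fin (2 ^ k)) (Fin (2 ^ k)) ℂ) :
    Matrix (Fin (2 ^ n)) (Fin (2 ^ n)) ℂ :=
  ((List.finRange T).map fun p => embed n k p.1 (U p)).prod

/-- The MPS circuit built from unitaries. -/
def circuitOf (n k : ℕ) {T : ℕ} (U : Fin T → UG (2 ^ k)) :
    Matrix (Fin (2 ^ n)) (Fin (2 ^ n)) ℂ :=
  mpsCircuit n k fun p => (U p : Matrix (Fin (2 ^ k)) (Fin (2 ^ k)) ℂ)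

/-- The global observable `(|0⟩⟨0|)^{⊗ n} = |0…0⟩⟨0…0|`. -/
def proj00 (n : ℕ) : Matrix (Fin (2 ^ n)) (Fin (2 ^ n)) ℂ :=
  Matrix.single 0 0 1

/-- The Pauli `Z` on qubit `i` (1-indexed, qubit 1 = most significant bit) of `n` qubits,
tensored with the identity elsewhere. -/
def pauliZ (n i : ℕ) : Matrix (Fin (2 ^ n)) (Fin (2 ^ n)) ℂ :=
  Matrix.diagonal fun x => if bitAt (n - i) (x : ℕ) = 0 then 1 else -1

/-- The projector `|0⟩⟨0|_i` on qubit `i` (1-indexed) of `n` qubits, tensored with the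
identity elsewhere. -/
def proj0At (n i : ℕ) : Matrix (Fin (2 ^ n)) (Fin (2 ^ n)) ℂ :=
  Matrix.diagonal fun x => if bitAt (n - i) (x : ℕ) = 0 then 1 else 0

/-- `M 1 ⊗ M 2 ⊗ ⋯ ⊗ M n` of single-qubit matrices, as a `2^n × 2^n` matrix. -/
def tensorProd (n : ℕ) (M : Fin n → Matrix (Fin 2) (Fin 2) ℂ) :
    Matrix (Fin (2 ^ n)) (Fin (2 ^ n)) ℂ :=
  Matrix.of fun x y =>
    ∏ i : Fin n, M i (bitFin (n - 1 - (i : ℕ)) (x : ℕ)) (bitFin (n - 1 - (i : ℕ)) (y : ℕ))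

/-- The entrywise 1-norm `‖A‖₁ = Σ_{ij} |A_{ij}|`. -/
def entryOneNorm {d : ℕ} (A : Matrix (Fin d) (Fin d) ℂ) : ℝ :=
  ∑ i, ∑ j, ‖A i j‖

/-- `h₁(σ) = min over single-qubit unitaries V₁, …, V_n of ‖(V₁⊗⋯⊗V_n) σ (V₁⊗⋯⊗V_n)†‖₁²`. -/
def h1 (n : ℕ) (σ : Matrix (Fin (2 ^ n)) (Fin (2 ^ n)) ℂ) : ℝ :=
  ⨅ V : Fin n → UG 2,
    entryOneNorm (tensorProd n (fun i => (V i : Matrix (Fin 2) (Fin 2) ℂ)) * σ *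
      (tensorProd n fun i => (V i : Matrix (Fin 2) (Fin 2) ℂ))ᴴ) ^ 2

/-- The square root of a positive semidefinite matrix, with the definition `PosSemidef.sqrt`
had in the older Mathlib (it has since been removed). -/
def psdSqrt {d : ℕ} {A : Matrix (Fin d) (Fin d) ℂ} (hA : A.PosSemidef) :
    Matrix (Fin d) (Fin d) ℂ :=
  hA.1.eigenvectorUnitary.1 * diagonal ((↑) ∘ (Real.sqrt ∘ hA.1.eigenvalues)) *
    (star hA.1.eigenvectorUnitary : Matrix (Fin d) (Fin d) ℂ)

/-- The trace norm `‖A‖_tr = tr √(A† A)`. -/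
def traceNorm {d : ℕ} (A : Matrix (Fin d) (Fin d) ℂ) : ℝ :=
  (psdSqrt (Matrix.posSemidef_conjTranspose_mul_self A)).trace.re

/-- `h₂(σ) = min over single-qubit states ρ₁, …, ρ_n of ‖ρ₁⊗⋯⊗ρ_n − σ‖_tr`. -/
def h2 (n : ℕ) (σ : Matrix (Fin (2 ^ n)) (Fin (2 ^ n)) ℂ) : ℝ :=
  ⨅ ρ : Fin n → {ρ : Matrix (Fin 2) (Fin 2) ℂ // ρ.PosSemidef ∧ ρ.trace = 1},
    traceNorm (tensorProd n (fun i => (ρ i : Matrix (Fin 2) (Fin 2) ℂ)) - σ)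

end MPS

/-!
Write `t = n - i` for the bit carrying qubit `i` and `X` for the permutation matrix flipping it;
`X` anticommutes with `Z_i` and commutes with `Z_j`. Left-multiplying the gate of the first layer
whose window of bits contains `t` by the local bit flip turns `C` into `X * C`, because the earlier
layers act on lower bits only and so commute with `X`. This left translation preserves the Haar
product measure and negates `tr(Z_i C σ C†) · tr(Z_j C σ C†)`, so its expectation vanishes.
-/

open Matrix MeasureTheory

namespace Matrix

variable {n R : Type*} [Fintype n]

theorem trace_mul_mul_conjTranspose_mul_left [CommSemiring R] [StarRing R]
    (Z X C S : Matrix n n R) :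
    trace (Z * (X * C) * S * (X * C)ᴴ) = trace (Xᴴ * Z * X * C * S * Cᴴ) := by
  rw [conjTranspose_mul, ← Matrix.mul_assoc, trace_mul_comm]
  simp only [Matrix.mul_assoc]

variable [DecidableEq n]

theorem permMatrix_mem_unitaryGroup [CommRing R] [StarRing R] (σ : Equiv.Perm n) :
    σ.permMatrix R ∈ unitaryGroup n R := by
  rw [mem_unitaryGroup_iff', star_eq_conjTranspose, conjTranspose_permMatrix, ← permMatrix_mul,
    mul_inv_cancel, permMatrix_one]

theorem conjTranspose_permMatrix_mul_diagonal_mul_permMatrix [NonAssocSemiring R] [StarRing R]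
    (σ : Equiv.Perm n) (d : n → R) :
    (σ.permMatrix R)ᴴ * diagonal d * σ.permMatrix R = diagonal (d ∘ σ.symm) := by
  rw [conjTranspose_permMatrix, PEquiv.toMatrix_toPEquiv_mul, PEquiv.mul_toMatrix_toPEquiv,
    submatrix_submatrix, Function.comp_id, Function.id_comp]
  exact submatrix_diagonal_equiv d σ.symm

end Matrix

theorem List.prod_map_finRange_update_mul {M : Type*} [Monoid M] {T : ℕ} (f : Fin T → M)
    (p₀ : Fin T) (X : M) (hX : ∀ p < p₀, Commute X (f p)) :
    ((List.finRange T).map (Function.update f p₀ (X * f p₀))).prod =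
      X * ((List.finRange T).map f).prod := by
  simp only [← List.ofFn_eq_map]
  induction T with
  | zero => exact p₀.elim0
  | succ T ih =>
    rw [List.ofFn_succ, List.ofFn_succ, List.prod_cons, List.prod_cons]
    induction p₀ using Fin.cases with
    | zero =>
      simp only [Function.update_self, Function.update_of_ne (Fin.succ_ne_zero _), mul_assoc]
    | succ q =>
      have htail : (fun p : Fin T => Function.update f q.succ (X * f q.succ) p.succ) =
          Function.update (fun p => f p.succ) q (X * f q.succ) :=
        Function.update_comp_eq_of_injective f (Fin.succ_injective T) q _
      rw [Function.update_of_ne (Fin.succ_ne_zero q).symm, htail,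
        ih (fun p => f p.succ) q fun p hp => hX p.succ (Fin.succ_lt_succ_iff.mpr hp)]
      exact ((hX 0 (Fin.succ_pos q)).left_comm _).symm

namespace Nat

theorem two_pow_div_two_pow_of_lt {t m : ℕ} (h : t < m) : 2 ^ t / 2 ^ m = 0 :=
  Nat.div_eq_of_lt (Nat.pow_lt_pow_right (by norm_num) h)

theorem two_pow_mod_two_pow_of_le {t m : ℕ} (h : m ≤ t) : 2 ^ t % 2 ^ m = 0 :=
  Nat.mod_eq_zero_of_dvd (Nat.pow_dvd_pow 2 h)

end Nat

namespace MPS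

theorem bitAt_eq_zero_iff (t x : ℕ) : bitAt t x = 0 ↔ x.testBit t = false := by
  rw [Nat.testBit_eq_decide_div_mod_eq, decide_eq_false_iff_not, bitAt]
  omega

def bitFlip (n t : ℕ) (h : t < n) : Equiv.Perm (Fin (2 ^ n)) :=
  Function.Involutive.toPerm
    (fun x => ⟨x ^^^ 2 ^ t, Nat.xor_lt_two_pow x.2 (Nat.pow_lt_pow_right (by norm_num) h)⟩)
    (fun x => Fin.ext (by simp))

theorem bitFlip_val {n t : ℕ} (h : t < n) (x : Fin (2 ^ n)) :
    (bitFlip n t h x : ℕ) = x ^^^ 2 ^ t := rfl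

theorem bitFlip_symm {n t : ℕ} (h : t < n) : (bitFlip n t h).symm = bitFlip n t h :=
  Function.Involutive.toPerm_symm _

theorem embed_permMatrix_bitFlip_mul {n k b s t : ℕ} (hs : s < k) (hst : s + b = t)
    (h : t < n) (U : Matrix (Fin (2 ^ k)) (Fin (2 ^ k)) ℂ) :
    embed n k b ((bitFlip k s hs).permMatrix ℂ * U) =
      (bitFlip n t h).permMatrix ℂ * embed n k b U := by
  subst hst
  have hdiv : 2 ^ (s + b) / 2 ^ b = 2 ^ s := by
    rw [Nat.pow_div (Nat.le_add_left b s) two_pos, Nat.add_sub_cancel]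
  have hmod : 2 ^ s % 2 ^ k = 2 ^ s := Nat.mod_eq_of_lt (Nat.pow_lt_pow_right (by norm_num) hs)
  rw [PEquiv.toMatrix_toPEquiv_mul, PEquiv.toMatrix_toPEquiv_mul]
  ext x y
  simp only [embed, of_apply, submatrix_apply, id, bitFlip_val, Nat.xor_div_two_pow,
    Nat.xor_mod_two_pow, Nat.two_pow_div_two_pow_of_lt (by omega : s + b < k + b),
    Nat.two_pow_mod_two_pow_of_le (Nat.le_add_left b s), Nat.xor_zero, hdiv, hmod]
  rfl

theorem commute_permMatrix_bitFlip_embed {n k b t : ℕ} (hkb : k + b ≤ t) (h : t < n)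
    (U : Matrix (Fin (2 ^ k)) (Fin (2 ^ k)) ℂ) :
    Commute ((bitFlip n t h).permMatrix ℂ) (embed n k b U) := by
  have hdiv : 2 ^ t / 2 ^ b % 2 ^ k = 0 := by
    rw [Nat.pow_div (by omega) two_pos]
    exact Nat.two_pow_mod_two_pow_of_le (by omega)
  rw [Commute, SemiconjBy, PEquiv.toMatrix_toPEquiv_mul, PEquiv.mul_toMatrix_toPEquiv,
    bitFlip_symm]
  ext x y
  simp only [embed, of_apply, submatrix_apply, id, bitFlip_val, Nat.xor_div_two_pow,
    Nat.xor_mod_two_pow, Nat.two_pow_mod_two_pow_of_le (by omega : b ≤ t), Nat.xor_zero, hdiv]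
  refine if_congr (and_congr_left' ?_) rfl rfl
  exact ⟨fun hxy => by rw [← hxy]; simp, fun hxy => by rw [hxy]; simp⟩

theorem bitFlip_conj_pauliZ_of_eq {n i t : ℕ} (h : t < n) (hi : n - i = t) :
    ((bitFlip n t h).permMatrix ℂ)ᴴ * pauliZ n i * (bitFlip n t h).permMatrix ℂ =
      -pauliZ n i := by
  rw [pauliZ, conjTranspose_permMatrix_mul_diagonal_mul_permMatrix, bitFlip_symm, diagonal_neg]
  congr 1
  funext x
  cases hx : (x : ℕ).testBit t <;>
    simp [bitAt_eq_zero_iff, bitFlip_val, Nat.testBit_xor, hi, hx]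

theorem bitFlip_conj_pauliZ_of_ne {n j t : ℕ} (h : t < n) (hj : n - j ≠ t) :
    ((bitFlip n t h).permMatrix ℂ)ᴴ * pauliZ n j * (bitFlip n t h).permMatrix ℂ =
      pauliZ n j := by
  rw [pauliZ, conjTranspose_permMatrix_mul_diagonal_mul_permMatrix, bitFlip_symm]
  congr 1
  funext x
  simp [bitAt_eq_zero_iff, bitFlip_val, Nat.testBit_xor, Ne.symm hj]

theorem circuitOf_mulSingle_mul {n k T : ℕ} (p₀ : Fin T) (u : UG (2 ^ k))
    (X : Matrix (Fin (2 ^ n)) (Fin (2 ^ n)) ℂ)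
    (hu : ∀ V, embed n k p₀ (u * V) = X * embed n k p₀ V)
    (hX : ∀ p < p₀, ∀ V, Commute X (embed n k p V)) (U : Fin T → UG (2 ^ k)) :
    circuitOf n k (Pi.mulSingle p₀ u * U) = X * circuitOf n k U := by
  have hlayers :
      (fun p : Fin T => embed n k p ((Pi.mulSingle p₀ u * U : Fin T → UG (2 ^ k)) p).1) =
        Function.update (fun p : Fin T => embed n k p (U p).1) p₀ (X * embed n k p₀ (U p₀)) := by
    funext p
    rcases eq_or_ne p p₀ with rfl | hp
    · simp [hu]
    · simp [hp]
  rw [circuitOf, mpsCircuit, hlayers,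
    List.prod_map_finRange_update_mul _ _ _ fun p hp => hX p hp _]
  rfl

theorem exists_circuitOf_mul_eq_bitFlip_mul {n k t : ℕ} (hk : 1 ≤ k) (ht : t < n) :
    ∃ g : Fin (n - k + 1) → UG (2 ^ k), ∀ U,
      circuitOf n k (g * U) = (bitFlip n t ht).permMatrix ℂ * circuitOf n k U := by
  -- the first layer whose window of bits `p₀, …, p₀ + k - 1` contains `t`
  let p₀ : Fin (n - k + 1) := ⟨t + 1 - k, by omega⟩
  have hp₀ : (p₀ : ℕ) = t + 1 - k := rfl
  have hs : t - p₀ < k := by omega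
  refine ⟨Pi.mulSingle p₀ ⟨_, permMatrix_mem_unitaryGroup (bitFlip k (t - p₀) hs)⟩,
    circuitOf_mulSingle_mul p₀ _ _ (fun V => ?_) (fun p hp V => ?_)⟩
  · exact embed_permMatrix_bitFlip_mul hs (by omega) ht V
  · exact commute_permMatrix_bitFlip_embed (by rw [Fin.lt_def] at hp; omega) ht V

instance (d : ℕ) : (haarUG d).IsMulLeftInvariant :=
  Measure.isMulLeftInvariant_haarMeasure _

instance (T d : ℕ) : (haarTuple T d).IsMulLeftInvariant :=
  Measure.pi.isMulLeftInvariant _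

end MPS

open scoped ComplexOrder

theorem mps_cross_moment_Z_eq_zero_general (n k : ℕ) (hk : 2 ≤ k)
    (σ : Matrix (Fin (2 ^ n)) (Fin (2 ^ n)) ℂ)
    (i j : ℕ) (hi1 : 1 ≤ i) (hin : i ≤ n) (hjn : j ≤ n) (hij : i ≠ j) :
    ∫ U : Fin (n - k + 1) → MPS.UG (2 ^ k),
        (Matrix.trace (MPS.pauliZ n i * MPS.circuitOf n k U * σ * (MPS.circuitOf n k U)ᴴ)).re *
        (Matrix.trace (MPS.pauliZ n j * MPS.circuitOf n k U * σ * (MPS.circuitOf n k U)ᴴ)).re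
      ∂ MPS.haarTuple (n - k + 1) (2 ^ k) = 0 := by
  have ht : n - i < n := by omega
  obtain ⟨g, hg⟩ := MPS.exists_circuitOf_mul_eq_bitFlip_mul (by omega : 1 ≤ k) ht
  refine integral_eq_zero_of_mul_left_eq_neg (g := g) fun U => ?_
  rw [hg, trace_mul_mul_conjTranspose_mul_left, trace_mul_mul_conjTranspose_mul_left,
    MPS.bitFlip_conj_pauliZ_of_eq ht rfl, MPS.bitFlip_conj_pauliZ_of_ne ht (by omega)]
  rw [Matrix.neg_mul, Matrix.neg_mul, Matrix.neg_mul, trace_neg, Complex.neg_re, neg_mul]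

/-- For distinct qubits `i ≠ j`,
`E[tr(Z_i C σ C†) · tr(Z_j C σ C†)] = 0`. -/
theorem mps_cross_moment_Z_eq_zero (n k : ℕ) (hk : 2 ≤ k) (hkn : k ≤ n)
    (σ : Matrix (Fin (2 ^ n)) (Fin (2 ^ n)) ℂ)
    (hσ : σ.PosSemidef) (hσtr : σ.trace = 1)
    (i j : ℕ) (hi1 : 1 ≤ i) (hin : i ≤ n) (hj1 : 1 ≤ j) (hjn : j ≤ n) (hij : i ≠ j) :
    ∫ U : Fin (n - k + 1) → MPS.UG (2 ^ k),
        (Matrix.trace (MPS.pauliZ n i * MPS.circuitOf n k U * σ * (MPS.circuitOf n k U)ᴴ)).re *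
        (Matrix.trace (MPS.pauliZ n j * MPS.circuitOf n k U * σ * (MPS.circuitOf n k U)ᴴ)).re
      ∂ MPS.haarTuple (n - k + 1) (2 ^ k) = 0 :=
  mps_cross_moment_Z_eq_zero_general n k hk σ i j hi1 hin hjn hij
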